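/- Morse matchings on a 1-dimensional simplicial complex Δ (i.e., a graph G) are in bijection with orientations of subgraphs of G that are branchings: if M is a Morse matching, orienting each matched edge toward its matched vertex yields a subgraph in which every vertex has in-degree at most one and which contains no directed cycle; conversely every such branching arises from a unique Morse matching. -/

import Mathlib

open Finset

variable {V : Type*} [DecidableEq V]

/-- A finite abstract simplicial complex on vertex set `V`: a finite family of
nonempty finite subsets closed under taking nonempty subsets. -/
structure SC (V : Type*) [DecidableEq V] where
  faces : Finset (Finset V)
  nonempty_mem : ∀ F ∈ faces, F.Nonempty
  down_closed : ∀ F ∈ faces, ∀ G : Finset V, G.Nonempty → G ⊆ F → G ∈ faces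

/-- Arcs of the Hasse diagram: pairs `(G, F)` with `F ≺ G` (covering relation),
directed from the higher- to the lower-dimensional face. -/
def arcs (Δ : SC V) : Finset (Finset V × Finset V) :=
  (Δ.faces ×ˢ Δ.faces).filter fun p => p.2 ⊆ p.1 ∧ p.2.card + 1 = p.1.card

/-- The set `δ(F)` of arcs incident to the face `F`. -/
def inc (Δ : SC V) (F : Finset V) : Finset (Finset V × Finset V) :=
  (arcs Δ).filter fun a => a.1 = F ∨ a.2 = F

/-- `M` is a matching in the Hasse diagram: a set of arcs such that each face is
incident to at most one arc of `M`. -/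
def IsMatching (Δ : SC V) (M : Finset (Finset V × Finset V)) : Prop :=
  M ⊆ arcs Δ ∧ ∀ a ∈ M, ∀ b ∈ M, a ≠ b →
    a.1 ≠ b.1 ∧ a.1 ≠ b.2 ∧ a.2 ≠ b.1 ∧ a.2 ≠ b.2

/-- The arc relation of the modified Hasse diagram `H(M)`: arcs of `H` with the
arcs of `M` reversed. -/
def HMrel (Δ : SC V) (M : Finset (Finset V × Finset V)) (X Y : Finset V) : Prop :=
  ((X, Y) ∈ arcs Δ ∧ (X, Y) ∉ M) ∨ (Y, X) ∈ M

/-- A simple directed cycle of length `n` in the relation `r`,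
given as an injective cyclic sequence of vertices. -/
def IsDirCycle {α : Type*} (r : α → α → Prop) (n : ℕ) (c : ZMod n → α) : Prop :=
  2 ≤ n ∧ Function.Injective c ∧ ∀ i, r (c i) (c (i + 1))

/-- A Morse matching: a matching `M` such that `H(M)` is acyclic. -/
def IsMorse (Δ : SC V) (M : Finset (Finset V × Finset V)) : Prop :=
  IsMatching Δ M ∧ ∀ (n : ℕ) (c : ZMod n → Finset V), ¬ IsDirCycle (HMrel Δ M) n c

/-- A branching on (the graph of) `Δ`: an orientation `D` of a subgraph of the
graph of `Δ` in which every vertex has in-degree at most one and which contains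
no directed cycle. -/
def IsBranching (Δ : SC V) (D : V → V → Prop) : Prop :=
  (∀ u v, D u v → u ≠ v ∧ ({u, v} : Finset V) ∈ Δ.faces) ∧
  (∀ v u u', D u v → D u' v → u = u') ∧
  (∀ (n : ℕ) (c : ZMod n → V), ¬ IsDirCycle D n c)

/-! A matching of a graph pairs each matched edge `{u, v}` with one endpoint `v`; read as the arc
`u → v`, the matching condition says that every vertex has in-degree at most one and that no edge
is used in both directions. In `H(M)` vertices and edges alternate, the only way up from `{v}` is
its matched edge `{u, v}`, and the way down from there leads to `{u}`. So the closed walks of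
`H(M)` are the closed walks `{v} → {u, v} → {u} → ⋯` of the reversed orientation, and `H(M)` is
acyclic iff the orientation is. Cycles are compared through the transitive closure, since a closed
walk of minimal length is a simple cycle. -/

open Relation

section DirCycle

variable {α : Type*} {r : α → α → Prop}

lemma IsDirCycle.transGen_self {n : ℕ} {c : ZMod n → α} (h : IsDirCycle r n c) :
    TransGen r (c 0) (c 0) := by
  obtain ⟨hn, -, hstep⟩ := h
  have hpath : ∀ k : ℕ, TransGen r (c 0) (c (k + 1 : ℕ)) := by
    intro k
    induction k with
    | zero => simpa using TransGen.single (hstep 0)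
    | succ k ih => exact ih.tail (by simpa using hstep ((k + 1 : ℕ) : ZMod n))
  simpa [Nat.sub_add_cancel (by omega : 1 ≤ n)] using hpath (n - 1)

lemma TransGen.exists_walk {a b : α} (h : TransGen r a b) :
    ∃ n, 0 < n ∧ ∃ f : ℕ → α, f 0 = a ∧ f n = b ∧ ∀ i < n, r (f i) (f (i + 1)) := by
  induction h with
  | @single b hab => exact ⟨1, one_pos, fun i => if i = 0 then a else b, by simp, by simp,
      fun i hi => by simpa [Nat.lt_one_iff.mp hi] using hab⟩
  | @tail b c _ hbc ih =>
    obtain ⟨n, hn, f, hf0, hfn, hf⟩ := ih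
    refine ⟨n + 1, n.succ_pos, fun i => if i ≤ n then f i else c, by simp [hf0], by simp, ?_⟩
    intro i hi
    rcases Nat.lt_or_ge i n with hin | hin
    · simpa [hin.le, Nat.succ_le_of_lt hin] using hf i hin
    · obtain rfl : i = n := by omega
      simpa [hfn] using hbc

lemma exists_isDirCycle_of_transGen_self (hr : ∀ x, ¬ r x x) {x : α} (h : TransGen r x x) :
    ∃ n c, IsDirCycle r n c := by
  classical
  have hwalk : ∃ n, 0 < n ∧ ∃ f : ℕ → α, f n = f 0 ∧ ∀ i < n, r (f i) (f (i + 1)) := by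
    obtain ⟨n, hn, f, hf0, hfn, hf⟩ := TransGen.exists_walk h
    exact ⟨n, hn, f, hfn.trans hf0.symm, hf⟩
  set n := Nat.find hwalk
  obtain ⟨hn, f, hfn, hf⟩ := Nat.find_spec hwalk
  have hinj : ∀ i j, i < j → j < n → f i ≠ f j := fun i j hij hjn hfij =>
    Nat.find_min hwalk (show j - i < n by omega)
      ⟨by omega, fun k => f (i + k), by simp [hfij, Nat.add_sub_cancel' hij.le],
        fun k hk => hf (i + k) (by omega)⟩
  have hn2 : 2 ≤ n := by
    by_contra hlt
    obtain hn1 : n = 1 := by omega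
    have hloop := hf 0 (by omega)
    rw [zero_add, show 1 = n from hn1.symm, hfn] at hloop
    exact hr _ hloop
  have : NeZero n := ⟨by omega⟩
  have : Fact (1 < n) := ⟨hn2⟩
  refine ⟨n, fun i => f i.val, hn2, fun i j hij => ZMod.val_injective n ?_, fun i => ?_⟩
  · rcases lt_trichotomy i.val j.val with hlt | heq | hgt
    · exact absurd hij (hinj _ _ hlt j.val_lt)
    · exact heq
    · exact absurd hij.symm (hinj _ _ hgt i.val_lt)
  · simp only [ZMod.val_add, ZMod.val_one]
    rcases Nat.lt_or_ge (i.val + 1) n with hlt | hge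
    · simpa [Nat.mod_eq_of_lt hlt] using hf _ i.val_lt
    · obtain hi : i.val + 1 = n := by have := i.val_lt; omega
      simpa [hi, ← hfn] using hf _ i.val_lt

lemma forall_not_isDirCycle_iff (hr : ∀ x, ¬ r x x) :
    (∀ n c, ¬ IsDirCycle r n c) ↔ ∀ x, ¬ TransGen r x x := by
  refine ⟨fun h x hx => ?_, fun h n c hc => h _ hc.transGen_self⟩
  obtain ⟨n, c, hc⟩ := exists_isDirCycle_of_transGen_self hr hx
  exact h n c hc

lemma transGen_of_bipartite {β : Type*} {s : β → β → Prop} {f : β → α}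
    (hr : ∀ x y, r x y → (x ∈ Set.range f ↔ y ∉ Set.range f))
    (hs : ∀ a b y, r (f a) y → r y (f b) → s a b) {a b : β} (h : TransGen r (f a) (f b)) :
    TransGen s a b := by
  suffices key : ∀ y, TransGen r (f a) y → (∀ b, y = f b → TransGen s a b) ∧
      (y ∉ Set.range f → ∃ b, ReflTransGen s a b ∧ r (f b) y) from (key _ h).1 b rfl
  intro y hy
  induction hy with
  | @single y hy =>
    refine ⟨?_, fun _ => ⟨a, .refl, hy⟩⟩
    rintro b rfl
    exact absurd ⟨b, rfl⟩ ((hr _ _ hy).mp ⟨a, rfl⟩)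
  | @tail y z _ hyz ih =>
    by_cases hz : z ∈ Set.range f
    · have hy : y ∉ Set.range f := fun hy => (hr _ _ hyz).mp hy hz
      refine ⟨?_, fun h => absurd hz h⟩
      rintro c rfl
      obtain ⟨b, hab, hby⟩ := ih.2 hy
      exact TransGen.trans_right hab (.single (hs _ _ _ hby hyz))
    · obtain ⟨b, rfl⟩ : y ∈ Set.range f := (hr _ _ hyz).mpr hz
      exact ⟨fun c hc => absurd ⟨c, hc.symm⟩ hz, fun _ => ⟨b, (ih.1 b rfl).to_reflTransGen, hyz⟩⟩

lemma exists_transGen_self_of_bipartite {β : Type*} {s : β → β → Prop} {f : β → α}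
    (hr : ∀ x y, r x y → (x ∈ Set.range f ↔ y ∉ Set.range f))
    (hs : ∀ a b y, r (f a) y → r y (f b) → s a b) {x : α} (h : TransGen r x x) :
    ∃ a, TransGen s a a := by
  obtain ⟨y, hxy, hyx⟩ := TransGen.head'_iff.mp h
  have hyy : TransGen r y y := TransGen.tail' hyx hxy
  by_cases hx : x ∈ Set.range f
  · obtain ⟨a, rfl⟩ := hx
    exact ⟨a, transGen_of_bipartite hr hs h⟩
  · obtain ⟨a, rfl⟩ := (hr _ _ hxy).not_left.mp hx
    exact ⟨a, transGen_of_bipartite hr hs hyy⟩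

end DirCycle

section OneDimensional

variable {Δ : SC V} {M : Finset (Finset V × Finset V)} {D : V → V → Prop}

lemma mem_arcs_iff {a : Finset V × Finset V} :
    a ∈ arcs Δ ↔ a.1 ∈ Δ.faces ∧ a.2 ∈ Δ.faces ∧ a.2 ⊆ a.1 ∧ a.2.card + 1 = a.1.card := by
  simp [arcs, and_assoc]

lemma pair_singleton_mem_arcs_iff {u v : V} :
    (({u, v}, {v}) : Finset V × Finset V) ∈ arcs Δ ↔ u ≠ v ∧ {u, v} ∈ Δ.faces := by
  rw [mem_arcs_iff]
  refine ⟨fun ⟨hf, _, _, hcard⟩ => ⟨fun huv => by simp [huv] at hcard, hf⟩,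
    fun ⟨huv, hf⟩ => ⟨hf, Δ.down_closed _ hf _ (singleton_nonempty v) (by simp), by simp, ?_⟩⟩
  simp [card_pair huv]

lemma pair_singleton_inj {u v u' v' : V} (h : u' ≠ v') :
    (({u, v}, {v}) : Finset V × Finset V) = ({u', v'}, {v'}) ↔ u = u' ∧ v = v' := by
  refine ⟨fun heq => ?_, by rintro ⟨rfl, rfl⟩; rfl⟩
  obtain ⟨hpair, hv⟩ := Prod.mk.inj heq
  obtain rfl := singleton_injective hv
  have hu : u ∈ ({u', v} : Finset V) := hpair ▸ mem_insert_self u {v}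
  have hu' : u' ∈ ({u, v} : Finset V) := hpair ▸ mem_insert_self u' {v}
  simp only [mem_insert, mem_singleton] at hu hu'
  exact ⟨hu.resolve_right fun huv => h (hu'.resolve_left fun hu'u => h (hu'u.trans huv)), rfl⟩

lemma exists_eq_pair_singleton_of_mem_arcs (hdim : ∀ F ∈ Δ.faces, F.card ≤ 2)
    {a : Finset V × Finset V} (ha : a ∈ arcs Δ) :
    ∃ u v, u ≠ v ∧ a = ({u, v}, {v}) := by
  obtain ⟨h1, h2, hsub, hcard⟩ := mem_arcs_iff.mp ha
  have := hdim _ h1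
  have := (Δ.nonempty_mem _ h2).card_pos
  obtain ⟨v, hv⟩ := card_eq_one.mp (show a.2.card = 1 by omega)
  obtain ⟨x, y, hxy, hxy'⟩ := card_eq_two.mp (show a.1.card = 2 by omega)
  have hva : v ∈ a.1 := hsub (hv ▸ mem_singleton_self v)
  rw [hxy', mem_insert, mem_singleton] at hva
  rcases hva with rfl | rfl
  · exact ⟨y, v, hxy.symm, Prod.ext (hxy'.trans (pair_comm _ _)) hv⟩
  · exact ⟨x, v, hxy, Prod.ext hxy' hv⟩

lemma IsMatching.eq_of_fst_eq (hM : IsMatching Δ M) {a b : Finset V × Finset V} (ha : a ∈ M)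
    (hb : b ∈ M) (h : a.1 = b.1) : a = b :=
  by_contra fun hab => (hM.2 a ha b hb hab).1 h

lemma IsMatching.eq_of_snd_eq (hM : IsMatching Δ M) {a b : Finset V × Finset V} (ha : a ∈ M)
    (hb : b ∈ M) (h : a.2 = b.2) : a = b :=
  by_contra fun hab => (hM.2 a ha b hb hab).2.2.2 h

lemma HMrel.mem_faces_and_card_eq (hM : M ⊆ arcs Δ) {X Y : Finset V} (h : HMrel Δ M X Y) :
    X ∈ Δ.faces ∧ Y ∈ Δ.faces ∧ (X.card = Y.card + 1 ∨ Y.card = X.card + 1) := by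
  rcases h with ⟨h, -⟩ | h
  · obtain ⟨hX, hY, -, hcard⟩ := mem_arcs_iff.mp h
    exact ⟨hX, hY, .inl hcard.symm⟩
  · obtain ⟨hY, hX, -, hcard⟩ := mem_arcs_iff.mp (hM h)
    exact ⟨hX, hY, .inr hcard.symm⟩

lemma HMrel.irrefl (hM : M ⊆ arcs Δ) (X : Finset V) : ¬ HMrel Δ M X X := fun h => by
  have := (HMrel.mem_faces_and_card_eq hM h).2.2
  omega

lemma IsMatching.transGen_hMrel_of_mem (hM : IsMatching Δ M) {u v : V}
    (h : (({u, v} : Finset V), ({v} : Finset V)) ∈ M) : TransGen (HMrel Δ M) {v} {u} := by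
  obtain ⟨huv, hf⟩ := pair_singleton_mem_arcs_iff.mp (hM.1 h)
  have hdown : (({u, v} : Finset V), ({u} : Finset V)) ∈ arcs Δ := by
    rw [pair_comm]
    exact pair_singleton_mem_arcs_iff.mpr ⟨huv.symm, pair_comm u v ▸ hf⟩
  refine .tail (.single (.inr h)) (.inl ⟨hdown, fun h' => huv ?_⟩)
  exact singleton_injective (congrArg Prod.snd (hM.eq_of_fst_eq h' h rfl))

lemma IsMorse.isBranching (hM : IsMorse Δ M) :
    IsBranching Δ (fun u v => (({u, v} : Finset V), ({v} : Finset V)) ∈ M) := by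
  obtain ⟨hmat, hacyc⟩ := hM
  have harc : ∀ {u v}, (({u, v} : Finset V), ({v} : Finset V)) ∈ M → u ≠ v ∧ {u, v} ∈ Δ.faces :=
    fun h => pair_singleton_mem_arcs_iff.mp (hmat.1 h)
  have hirr : ∀ u, (({u, u} : Finset V), ({u} : Finset V)) ∉ M := fun u h => (harc h).1 rfl
  refine ⟨fun u v h => harc h, fun v u u' h h' => ?_,
    (forall_not_isDirCycle_iff hirr).mpr fun x hx => ?_⟩
  · have := hmat.eq_of_snd_eq h h' rfl
    exact ((pair_singleton_inj (harc h').1).mp this).1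
  · exact (forall_not_isDirCycle_iff (HMrel.irrefl hmat.1)).mp hacyc {x}
      (TransGen.lift' (fun v : V => ({v} : Finset V))
        (fun _ _ h => hmat.transGen_hMrel_of_mem h) x x (transGen_swap.mpr hx))

open Classical in
noncomputable def matchingOf (Δ : SC V) (D : V → V → Prop) : Finset (Finset V × Finset V) :=
  (arcs Δ).filter fun a => ∃ u v, D u v ∧ a = ({u, v}, {v})

lemma mem_matchingOf {a : Finset V × Finset V} :
    a ∈ matchingOf Δ D ↔ a ∈ arcs Δ ∧ ∃ u v, D u v ∧ a = ({u, v}, {v}) := by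
  classical
  rw [matchingOf, mem_filter]

lemma IsBranching.pair_singleton_mem_matchingOf_iff (hD : IsBranching Δ D) {u v : V} :
    (({u, v}, {v}) : Finset V × Finset V) ∈ matchingOf Δ D ↔ D u v := by
  refine ⟨fun h => ?_, fun h => mem_matchingOf.mpr
    ⟨pair_singleton_mem_arcs_iff.mpr (hD.1 u v h), u, v, h, rfl⟩⟩
  obtain ⟨-, u', v', h', heq⟩ := mem_matchingOf.mp h
  obtain ⟨rfl, rfl⟩ := (pair_singleton_inj (hD.1 u' v' h').1).mp heq
  exact h'

lemma IsBranching.not_transGen_self (hD : IsBranching Δ D) (v : V) : ¬ TransGen D v v :=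
  (forall_not_isDirCycle_iff fun x hx => (hD.1 x x hx).1 rfl).mp hD.2.2 v

lemma IsBranching.isMatching_matchingOf (hD : IsBranching Δ D) : IsMatching Δ (matchingOf Δ D) := by
  refine ⟨fun a ha => (mem_matchingOf.mp ha).1, fun a ha b hb hab => ?_⟩
  obtain ⟨-, u, v, huv, rfl⟩ := mem_matchingOf.mp ha
  obtain ⟨-, u', v', huv', rfl⟩ := mem_matchingOf.mp hb
  have hne := (hD.1 u v huv).1
  have hne' := (hD.1 u' v' huv').1
  have hv : v ≠ v' := by
    rintro rfl
    exact hab (by rw [hD.2.1 v u u' huv huv'])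
  refine ⟨fun h => ?_, fun h => ?_, fun h => ?_, fun h => hv (singleton_injective h)⟩
  · change ({u, v} : Finset V) = {u', v'} at h
    have hmem : v ∈ ({u', v'} : Finset V) := h ▸ mem_insert_of_mem (mem_singleton_self v)
    have hmem' : v' ∈ ({u, v} : Finset V) := h ▸ mem_insert_of_mem (mem_singleton_self v')
    simp only [mem_insert, mem_singleton] at hmem hmem'
    obtain rfl := hmem.resolve_right hv
    obtain rfl := hmem'.resolve_right (Ne.symm hv)
    exact hD.not_transGen_self _ (.head huv (.single huv'))
  · simpa [card_pair hne] using congrArg card h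
  · simpa [card_pair hne'] using congrArg card h.symm

lemma IsBranching.apply_of_hMrel_of_hMrel (hD : IsBranching Δ D) {v w : V} {Y : Finset V}
    (hvY : HMrel Δ (matchingOf Δ D) {v} Y) (hYw : HMrel Δ (matchingOf Δ D) Y {w}) : D w v := by
  obtain ⟨u, huv, rfl⟩ : ∃ u, D u v ∧ Y = {u, v} := by
    rcases hvY with ⟨harc, -⟩ | hmem
    · obtain ⟨-, hY, -, hcard⟩ := mem_arcs_iff.mp harc
      simp [(Δ.nonempty_mem _ hY).card_pos.ne'] at hcard
    · obtain ⟨-, u, v', huv', heq⟩ := mem_matchingOf.mp hmem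
      obtain ⟨rfl, hvv'⟩ := Prod.mk.inj heq
      obtain rfl := singleton_injective hvv'
      exact ⟨u, huv', rfl⟩
  rcases hYw with ⟨harc, hnot⟩ | hmem
  · have hw : w ∈ ({u, v} : Finset V) := (mem_arcs_iff.mp harc).2.2.1 (mem_singleton_self w)
    rcases mem_insert.mp hw with rfl | hwv
    · exact huv
    · rw [mem_singleton.mp hwv, hD.pair_singleton_mem_matchingOf_iff] at hnot
      exact absurd huv hnot
  · have hcard := (mem_arcs_iff.mp (mem_matchingOf.mp hmem).1).2.2.2
    simp [card_pair (hD.1 u v huv).1] at hcard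

lemma IsBranching.isMorse_matchingOf (hdim : ∀ F ∈ Δ.faces, F.card ≤ 2) (hD : IsBranching Δ D) :
    IsMorse Δ (matchingOf Δ D) := by
  have hmat := hD.isMatching_matchingOf
  refine ⟨hmat, (forall_not_isDirCycle_iff (HMrel.irrefl hmat.1)).mpr fun X hX => ?_⟩
  have hbip : ∀ X Y, HMrel Δ (matchingOf Δ D) X Y →
      (X ∈ Set.range (singleton : V → Finset V) ↔ Y ∉ Set.range (singleton : V → Finset V)) := by
    intro X Y h
    obtain ⟨hX, hY, hcard⟩ := HMrel.mem_faces_and_card_eq hmat.1 h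
    have := hdim X hX
    have := hdim Y hY
    have := (Δ.nonempty_mem X hX).card_pos
    have := (Δ.nonempty_mem Y hY).card_pos
    simp only [Set.mem_range, eq_comm (b := X), eq_comm (b := Y), ← card_eq_one]
    omega
  obtain ⟨v, hv⟩ := exists_transGen_self_of_bipartite hbip
    (fun v w Y hvY hYw => hD.apply_of_hMrel_of_hMrel hvY hYw) hX
  exact hD.not_transGen_self v (transGen_swap.mp hv)

lemma IsMorse.matchingOf_eq (hdim : ∀ F ∈ Δ.faces, F.card ≤ 2) (hM : IsMorse Δ M) :
    matchingOf Δ (fun u v => (({u, v} : Finset V), ({v} : Finset V)) ∈ M) = M := by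
  ext a
  refine ⟨fun ha => ?_, fun ha => mem_matchingOf.mpr ⟨hM.1.1 ha, ?_⟩⟩
  · obtain ⟨-, u, v, huv, rfl⟩ := mem_matchingOf.mp ha
    exact huv
  · obtain ⟨u, v, -, rfl⟩ := exists_eq_pair_singleton_of_mem_arcs hdim (hM.1.1 ha)
    exact ⟨u, v, ha, rfl⟩

end OneDimensional

/-- For a one-dimensional simplicial complex (a graph), the
Morse matchings are in one-to-one correspondence with branchings: the
bijection sends a Morse matching `M` to the orientation in which every matched
edge points towards its matched vertex. -/
theorem morse_matchings_equiv_branchings (Δ : SC V)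
    (hdim : ∀ F ∈ Δ.faces, F.card ≤ 2) :
    ∃ e : {M : Finset (Finset V × Finset V) // IsMorse Δ M} ≃
        {D : V → V → Prop // IsBranching Δ D},
      ∀ M, (e M).val = fun u v => (({u, v} : Finset V), ({v} : Finset V)) ∈ M.val :=
  ⟨{ toFun := fun M => ⟨_, M.2.isBranching⟩
     invFun := fun D => ⟨matchingOf Δ D, D.2.isMorse_matchingOf hdim⟩
     left_inv := fun M => Subtype.ext (M.2.matchingOf_eq hdim)
     right_inv := fun D => Subtype.ext <| funext₂ fun _ _ =>
       propext D.2.pair_singleton_mem_matchingOf_iff }, fun _ => rfl⟩
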